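/- For any quandle X, the kernel of the natural surjection ψ_X : As(X) → Inn(X) is contained in the center of As(X). -/

import Mathlib

/-- A quandle in the convention of the paper. -/
class PQuandle (X : Type*) where
  op : X → X → X
  op_self : ∀ a : X, op a a = a
  op_bij : ∀ a : X, Function.Bijective (fun x => op x a)
  op_distrib : ∀ a b c : X, op (op a b) c = op (op a c) (op b c)

infixl:65 " ◁ " => PQuandle.op

namespace PQuandle

variable {X : Type*} [PQuandle X]

/-- The `n`-fold right operation `x ◁ⁿ y`. -/
def opn (x : X) (n : ℕ) (y : X) : X := (fun z => z ◁ y)^[n] x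

/-- The right translation `(· ◁ y)` as a permutation of `X`. -/
noncomputable def act (y : X) : Equiv.Perm X := Equiv.ofBijective _ (op_bij y)

@[simp] lemma act_apply (y x : X) : act y x = x ◁ y := rfl

/-- The inner automorphism group `Inn(X)`. -/
noncomputable def Inn (X : Type*) [PQuandle X] : Subgroup (Equiv.Perm X) :=
  Subgroup.closure (Set.range (act (X := X)))

/-- The relators `e_{x ◁ y}⁻¹ e_y⁻¹ e_x e_y` of the adjoint group. -/
def adjRels (X : Type*) [PQuandle X] : Set (FreeGroup X) :=
  { r | ∃ x y : X,
      r = (FreeGroup.of (x ◁ y))⁻¹ * (FreeGroup.of y)⁻¹ * FreeGroup.of x * FreeGroup.of y }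

/-- The adjoint (enveloping) group `As(X)` of the quandle `X`. -/
def Adj (X : Type*) [PQuandle X] : Type _ := PresentedGroup (adjRels X)

instance : Group (Adj X) := by unfold Adj; infer_instance

/-- The generator `e_x` of `As(X)`. -/
def gen (x : X) : Adj X := PresentedGroup.of x

lemma gen_rel (x y : X) : gen (x ◁ y) = (gen y)⁻¹ * gen x * gen y := by
  have h : ((FreeGroup.of (x ◁ y))⁻¹ * (FreeGroup.of y)⁻¹ * FreeGroup.of x * FreeGroup.of y :
      FreeGroup X) ∈ Subgroup.normalClosure (adjRels X) :=
    Subgroup.subset_normalClosure ⟨x, y, rfl⟩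
  have h2 : ((gen (x ◁ y))⁻¹ * (gen y)⁻¹ * gen x * gen y : Adj X) = 1 := by
    have := (QuotientGroup.eq_one_iff
      (((FreeGroup.of (x ◁ y))⁻¹ * (FreeGroup.of y)⁻¹ * FreeGroup.of x * FreeGroup.of y :
        FreeGroup X))).mpr h
    exact this
  calc gen (x ◁ y)
      = gen (x ◁ y) * ((gen (x ◁ y))⁻¹ * (gen y)⁻¹ * gen x * gen y) := by rw [h2, mul_one]
    _ = (gen y)⁻¹ * gen x * gen y := by group

lemma act_mul_act (x y : X) : act y * act x = act (x ◁ y) * act y := by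
  ext z
  simp only [Equiv.Perm.mul_apply, act_apply]
  exact op_distrib z x y

/-- The homomorphism `As(X) → Perm(X)` sending `e_y` to the inverse of the right
translation by `y`; it encodes the right action of `As(X)` on `X`. -/
noncomputable def innHom : Adj X →* Equiv.Perm X :=
  PresentedGroup.toGroup (f := fun y : X => (act y)⁻¹) (by
    rintro r ⟨x, y, rfl⟩
    simp only [map_mul, map_inv, FreeGroup.lift_apply_of, inv_inv]
    have := act_mul_act x y
    calc act (x ◁ y) * act y * (act x)⁻¹ * (act y)⁻¹
        = (act y * act x) * (act x)⁻¹ * (act y)⁻¹ := by rw [this]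
      _ = 1 := by group)

@[simp] lemma innHom_gen (y : X) : innHom (gen y) = (act y)⁻¹ :=
  PresentedGroup.toGroup.of _

/-- The right action of `As(X)` on `X`: `x · g`. -/
noncomputable def ract (x : X) (g : Adj X) : X := (innHom g)⁻¹ x

@[simp] lemma ract_gen (x y : X) : ract x (gen y) = x ◁ y := by
  simp [ract]

lemma ract_mul (x : X) (g h : Adj X) : ract x (g * h) = ract (ract x g) h := by
  simp [ract, map_mul]

/-- A quandle is connected if the right action of `As(X)` on `X` is transitive. -/
def Connected (X : Type*) [PQuandle X] : Prop :=
  ∀ x y : X, ∃ g : Adj X, ract x g = y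

/-- The homomorphism `ε : As(X) → ℤ` sending every generator `e_x` to `1`. -/
def eps : Adj X →* Multiplicative ℤ :=
  PresentedGroup.toGroup (f := fun _ : X => Multiplicative.ofAdd 1) (by
    rintro r ⟨x, y, rfl⟩
    simp only [map_mul, map_inv, FreeGroup.lift_apply_of]
    group)

@[simp] lemma eps_gen (x : X) : eps (gen x) = Multiplicative.ofAdd 1 :=
  PresentedGroup.toGroup.of _

/-- The underlying set of the universal covering quandle: `Ker ε`. -/
def covOp (a : X) (g h : (eps (X := X)).ker) : (eps (X := X)).ker :=
  ⟨(gen a)⁻¹ * g.1 * (h.1)⁻¹ * gen a * h.1, by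
    have hg : eps g.1 = 1 := g.2
    have hh : eps h.1 = 1 := h.2
    simp only [MonoidHom.mem_ker, map_mul, map_inv, hg, hh]
    group⟩

/-- `n`-fold covering operation. -/
def covOpn (a : X) (g : (eps (X := X)).ker) (n : ℕ) (h : (eps (X := X)).ker) :
    (eps (X := X)).ker := (fun u => covOp a u h)^[n] g

/-- The right translation of the covering quandle as a permutation. -/
def covAct (a : X) (h : (eps (X := X)).ker) : Equiv.Perm (eps (X := X)).ker where
  toFun g := covOp a g h
  invFun g := ⟨gen a * g.1 * (h.1)⁻¹ * (gen a)⁻¹ * h.1, by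
    have hg : eps g.1 = 1 := g.2
    have hh : eps h.1 = 1 := h.2
    simp only [MonoidHom.mem_ker, map_mul, map_inv, hg, hh]
    group⟩
  left_inv g := by
    apply Subtype.ext
    simp only [covOp]
    group
  right_inv g := by
    apply Subtype.ext
    simp only [covOp]
    group

end PQuandle

namespace PQuandle

variable {X : Type*} [PQuandle X]

@[simp] lemma ract_one (x : X) : ract x (1 : Adj X) = x := by
  simp [ract]

lemma ract_ract_inv (x : X) (g : Adj X) : ract (ract x g⁻¹) g = x := by
  rw [← ract_mul, inv_mul_cancel, ract_one]

/-- The elements satisfying this identity form a subgroup, and on a generator it is the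
defining relation of `As(X)`. -/
lemma gen_ract (x : X) (g : Adj X) : gen (ract x g) = g⁻¹ * gen x * g := by
  let H : Subgroup (Adj X) :=
    { carrier := {k | ∀ y, gen (ract y k) = k⁻¹ * gen y * k}
      one_mem' := fun y => by simp
      mul_mem' := fun {k l} hk hl y => by
        rw [ract_mul, hl, hk]
        group
      inv_mem' := fun {k} hk y => by
        have hy := hk (ract y k⁻¹)
        rw [ract_ract_inv] at hy
        rw [hy]
        group }
  exact PresentedGroup.generated_by _ H (fun z y =>
    show gen (ract y (gen z)) = (gen z)⁻¹ * gen y * gen z by rw [ract_gen, gen_rel]) g x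

lemma commute_gen_of_ract_eq {x : X} {g : Adj X} (hx : ract x g = x) : Commute (gen x) g := by
  have h := gen_ract x g
  rw [hx, mul_assoc, eq_inv_mul_iff_mul_eq] at h
  exact h.symm

lemma closure_range_gen : Subgroup.closure (Set.range (gen : X → Adj X)) = ⊤ :=
  PresentedGroup.closure_range_of _

lemma mem_center_of_forall_commute_gen {g : Adj X} (hg : ∀ x : X, Commute (gen x) g) :
    g ∈ Subgroup.center (Adj X) := by
  rw [Subgroup.center_eq_iInf closure_range_gen]
  simp only [Subgroup.mem_iInf, Set.forall_mem_range, Subgroup.mem_centralizer_singleton_iff]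
  exact fun x => (hg x).symm

end PQuandle

open PQuandle in
/-- The kernel of the natural surjection `ψ_X : As(X) → Inn(X)`, i.e. the set of elements
acting trivially on `X`, is contained in the center of `As(X)`. -/
theorem stmt12 (X : Type*) [PQuandle X] (g : Adj X) (hg : ∀ x : X, ract x g = x) :
    g ∈ Subgroup.center (Adj X) :=
  mem_center_of_forall_commute_gen fun x => commute_gen_of_ract_eq (hg x)
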